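/- Let F : ℝ^d → ℝ (d ≥ 1) be a convex function that is finite on all of ℝ^d and differentiable at 0, with m := ∇F(0). Define bar F(p) := max_{|ℓ|=1} F(pℓ) for p ≥ 0 (and +∞ for p < 0) and ubar(F*)(r) := inf_{|ℓ|=1} F*(rℓ) for r ≥ 0 (and +∞ for r < 0), where F* is the Legendre–Fenchel conjugate of F. Then: (i) bar F is increasing and convex on [0, ∞); (ii) (ubar(F*))*(p) = bar F(p) for all p ≥ 0; and (iii) for every r ≥ |m|, the largest convex minorant of ubar(F*) satisfies (conv ubar(F*))(r) = (bar F)*(r). -/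

import Mathlib

open Set Filter
open scoped ENNReal NNReal RealInnerProductSpace Topology

noncomputable section

/-- Euclidean space `ℝ^d`. -/
abbrev Ed (d : ℕ) : Type := EuclideanSpace ℝ (Fin d)

/-- The Legendre–Fenchel conjugate `F*(v) = sup_u (u·v − F(u))` of a finite function `F`,
with values in `EReal` (`F*` may take the value `+∞`). -/
def conjE {d : ℕ} (F : Ed d → ℝ) (v : Ed d) : EReal :=
  ⨆ u : Ed d, ((⟪u, v⟫ - F u : ℝ) : EReal)

/-- The radial minimum `ubar G(r) = inf_{|ℓ|=1} G(rℓ)` of `G`, set to `+∞` for `r < 0`. -/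
def ubarE {d : ℕ} (G : Ed d → EReal) (r : ℝ) : EReal :=
  if r < 0 then ⊤ else ⨅ ℓ ∈ {ℓ : Ed d | ‖ℓ‖ = 1}, G (r • ℓ)

/-- The radial maximum `bar F(p) = max_{|ℓ|=1} F(pℓ)` of a finite function `F`. -/
def barE {d : ℕ} (F : Ed d → ℝ) (p : ℝ) : ℝ :=
  sSup ((fun ℓ : Ed d => F (p • ℓ)) '' {ℓ : Ed d | ‖ℓ‖ = 1})

/-- The Legendre–Fenchel conjugate `g*(p) = sup_r (pr − g(r))` of an `EReal`-valued
function of a real variable. -/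
def conj1E (g : ℝ → EReal) (p : ℝ) : EReal :=
  ⨆ r : ℝ, (((p * r : ℝ) : EReal) - g r)

/-- Convexity of an `EReal`-valued function on a subset of `ℝ`. -/
def ERealConvexOn (s : Set ℝ) (h : ℝ → EReal) : Prop :=
  ∀ ⦃x⦄, x ∈ s → ∀ ⦃y⦄, y ∈ s → ∀ a b : ℝ≥0, a + b = 1 →
    h ((a : ℝ) * x + (b : ℝ) * y) ≤ ((a : ℝ) : EReal) * h x + ((b : ℝ) : EReal) * h y

/-- The largest convex minorant of an `EReal`-valued function on `ℝ`. -/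
def convMinE (g : ℝ → EReal) (x : ℝ) : EReal :=
  ⨆ h ∈ {h : ℝ → EReal | ERealConvexOn Set.univ h ∧ ∀ y, h y ≤ g y}, h x

/-!
(i) For each unit vector `ℓ`, `p ↦ F (p • ℓ)` is convex, so `bar F` is a supremum of convex
functions; convexity of `F` on the segment from `p • ℓ` to `-(p • ℓ)` gives `F 0 ≤ bar F p`, and a
convex function on `[0, ∞)` that is smallest at `0` is monotone.

(ii) Fenchel–Young gives `p r - ubar F*(r) ≤ bar F(p)`. Conversely, at a subgradient `v` of `F` at
`p • ℓ` Fenchel–Young is an equality, and testing `(ubar F*)*` at `r = ‖v‖` gives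
`F (p • ℓ) ≤ (ubar F*)*(p)`.

(iii) By (ii), `r ↦ sup_{p ≥ 0} (p r - bar F(p))` is a supremum of affine minorants of `ubar F*`,
hence a convex minorant. Conversely, let `h` be a convex minorant and `t < h r`. As `m` is a
subgradient of `F` at `0`, `ubar F* ≥ -F 0` with equality at `‖m‖ ≤ r`, so `k = max h (-F 0)` is a
convex minorant with `k ‖m‖ = -F 0`. If `k` is finite somewhere to the right of `r`, a subgradient
of `k` at `r` gives a line of slope `p ≥ 0` through `(r, t)` below `ubar F*`; otherwise
`ubar F* = ⊤` to the right of `r`, and since `ubar F*` is lower semicontinuous (`F*` is, and the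
unit sphere is compact) a steep enough such line exists. Then `(ubar F*)*(p) ≤ p r - t`, i.e.
`t ≤ p r - bar F(p)` by (ii).
-/

lemma EReal.coe_sub_le_coe_iff {x y : ℝ} {z : EReal} :
    (x : EReal) - z ≤ y ↔ ((x - y : ℝ) : EReal) ≤ z := by
  induction z using EReal.rec with
  | bot => exact iff_of_false (by simp) (EReal.bot_lt_coe _).not_ge
  | coe z => norm_cast; constructor <;> intro h <;> linarith
  | top => simp

theorem ConvexOn.exists_affine_le_of_mem_interior {S : Set ℝ} {f : ℝ → ℝ}
    (hf : ConvexOn ℝ S f) {x : ℝ} (hx : x ∈ interior S) :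
    ∃ p, ∀ y ∈ S, f x + p * (y - x) ≤ f y := by
  refine ⟨derivWithin f (Ioi x) x, fun y hy => ?_⟩
  rcases lt_trichotomy y x with hyx | rfl | hxy
  · have h := (hf.slope_le_leftDeriv_of_mem_interior hy hx hyx).trans
      (hf.leftDeriv_le_rightDeriv_of_mem_interior hx)
    rw [slope_def_field, div_le_iff₀ (sub_pos.2 hyx)] at h
    linarith
  · simp
  · have h := hf.rightDeriv_le_slope_of_mem_interior hx hy hxy
    rw [slope_def_field, le_div_iff₀ (sub_pos.2 hxy)] at h
    linarith

namespace ERealConvexOn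

variable {s : Set ℝ}

lemma const (c : ℝ) : ERealConvexOn s (fun _ => (c : EReal)) := by
  intro x _ y _ a b hab
  have hab' : (a : ℝ) + b = 1 := by exact_mod_cast hab
  rw [← EReal.coe_mul, ← EReal.coe_mul, ← EReal.coe_add, ← add_mul, hab', one_mul]

lemma affine (p q : ℝ) : ERealConvexOn s (fun x => ((p * x - q : ℝ) : EReal)) := by
  intro x _ y _ a b hab
  have hab' : (a : ℝ) + b = 1 := by exact_mod_cast hab
  rw [← EReal.coe_mul, ← EReal.coe_mul, ← EReal.coe_add, EReal.coe_le_coe_iff]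
  linear_combination q * hab'

lemma sup {h₁ h₂ : ℝ → EReal} (h₁cvx : ERealConvexOn s h₁) (h₂cvx : ERealConvexOn s h₂) :
    ERealConvexOn s (fun x => max (h₁ x) (h₂ x)) := by
  intro x hx y hy a b hab
  refine max_le ((h₁cvx hx hy a b hab).trans ?_) ((h₂cvx hx hy a b hab).trans ?_) <;>
    gcongr <;> simp

lemma iSup {ι : Sort*} {h : ι → ℝ → EReal} (hcvx : ∀ i, ERealConvexOn s (h i)) :
    ERealConvexOn s (fun x => ⨆ i, h i x) := by
  intro x hx y hy a b hab
  refine iSup_le fun i => (hcvx i hx hy a b hab).trans ?_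
  gcongr <;> exact le_iSup (fun i => h i _) i

lemma convexOn_toReal {k : ℝ → EReal} (hk : ERealConvexOn univ k) (hbot : ∀ x, k x ≠ ⊥) :
    ConvexOn ℝ {x | k x ≠ ⊤} (fun x => (k x).toReal) := by
  have key : ∀ ⦃x⦄, k x ≠ ⊤ → ∀ ⦃y⦄, k y ≠ ⊤ → ∀ ⦃a b : ℝ⦄, 0 ≤ a → 0 ≤ b → a + b = 1 →
      k (a * x + b * y) ≤ ((a * (k x).toReal + b * (k y).toReal : ℝ) : EReal) := by
    intro x hx y hy a b ha hb hab
    have h := hk (mem_univ x) (mem_univ y) ⟨a, ha⟩ ⟨b, hb⟩ (NNReal.eq hab)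
    rwa [← EReal.coe_toReal hx (hbot x), ← EReal.coe_toReal hy (hbot y)] at h
  refine ⟨fun x hx y hy a b ha hb hab => ?_, fun x hx y hy a b ha hb hab => ?_⟩
  · exact ne_top_of_le_ne_top (EReal.coe_ne_top _) (key hx hy ha hb hab)
  · exact EReal.toReal_le_toReal (key hx hy ha hb hab) (hbot _) (EReal.coe_ne_top _)

end ERealConvexOn

theorem ERealConvexOn.exists_nonneg_affine_le {k : ℝ → EReal} (hk : ERealConvexOn univ k)
    (hbot : ∀ x, k x ≠ ⊥) {s₀ r s₁ : ℝ} (h₀ : s₀ < r) (h₁ : r < s₁) (hk₀ : k s₀ ≤ k r)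
    (hk₀top : k s₀ ≠ ⊤) (hk₁top : k s₁ ≠ ⊤) :
    ∃ p, 0 ≤ p ∧ ∀ s, k r + ((p * (s - r) : ℝ) : EReal) ≤ k s := by
  have hD := hk.convexOn_toReal hbot
  have hr : r ∈ interior {x | k x ≠ ⊤} :=
    interior_maximal (fun x hx => hD.1.ordConnected.out hk₀top hk₁top (Ioo_subset_Icc_self hx))
      isOpen_Ioo ⟨h₀, h₁⟩
  have hkr : k r ≠ ⊤ := interior_subset hr
  obtain ⟨p, hp⟩ := hD.exists_affine_le_of_mem_interior hr
  refine ⟨p, ?_, fun s => ?_⟩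
  · have hκ : (k s₀).toReal ≤ (k r).toReal := EReal.toReal_le_toReal hk₀ (hbot _) hkr
    have : p * (s₀ - r) ≤ 0 := by linarith [hp s₀ hk₀top]
    exact nonneg_of_mul_nonpos_left this (sub_neg.2 h₀)
  · by_cases hs : k s = ⊤
    · rw [hs]; exact le_top
    rw [← EReal.coe_toReal hkr (hbot r), ← EReal.coe_toReal hs (hbot s), ← EReal.coe_add,
      EReal.coe_le_coe_iff]
    exact hp s hs

theorem exists_nonneg_affine_le_of_eq_top_right {g : ℝ → EReal} {c r t : ℝ}
    (hg : LowerSemicontinuousAt g r) (hc : ∀ s, (c : EReal) ≤ g s) (hct : c ≤ t)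
    (ht : (t : EReal) < g r) (htop : ∀ s, r < s → g s = ⊤) :
    ∃ p, 0 ≤ p ∧ ∀ s, ((t + p * (s - r) : ℝ) : EReal) ≤ g s := by
  obtain ⟨δ, hδ, hnear⟩ := Metric.eventually_nhds_iff.1 (hg t ht)
  set p := (t - c) / δ
  have hp : 0 ≤ p := div_nonneg (sub_nonneg.2 hct) hδ.le
  refine ⟨p, hp, fun s => ?_⟩
  rcases le_or_gt s (r - δ) with hfar | hclose
  · refine le_trans (EReal.coe_le_coe_iff.2 ?_) (hc s)
    have hpδ : p * δ = t - c := div_mul_cancel₀ _ hδ.ne'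
    nlinarith [mul_nonpos_of_nonneg_of_nonpos hp (by linarith : s - r + δ ≤ 0)]
  rcases le_or_gt s r with hsr | hrs
  · refine le_trans (EReal.coe_le_coe_iff.2 ?_) (hnear ?_).le
    · linarith [mul_nonpos_of_nonneg_of_nonpos hp (sub_nonpos.2 hsr)]
    · rw [Real.dist_eq, abs_sub_lt_iff]; constructor <;> linarith
  · rw [htop s hrs]; exact le_top

theorem exists_nonneg_affine_le_of_convex_minorant {g k : ℝ → EReal} {c s₀ r t : ℝ}
    (hk : ERealConvexOn univ k) (hkg : ∀ s, k s ≤ g s) (hg : LowerSemicontinuousAt g r)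
    (hc : ∀ s, (c : EReal) ≤ k s) (hs₀ : k s₀ ≤ c) (hs₀r : s₀ ≤ r) (ht : (t : EReal) < k r) :
    ∃ p, 0 ≤ p ∧ ∀ s, ((t + p * (s - r) : ℝ) : EReal) ≤ g s := by
  rcases le_or_gt t c with htc | hct
  · refine ⟨0, le_rfl, fun s => ?_⟩
    simpa using (EReal.coe_le_coe_iff.2 htc).trans ((hc s).trans (hkg s))
  have hr : s₀ < r := hs₀r.lt_of_ne <| by
    rintro rfl
    exact (ht.trans_le hs₀).not_ge (EReal.coe_le_coe_iff.2 hct.le)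
  by_cases hfin : ∃ s₁, r < s₁ ∧ k s₁ ≠ ⊤
  · obtain ⟨s₁, hrs₁, hk₁⟩ := hfin
    obtain ⟨p, hp, hle⟩ := hk.exists_nonneg_affine_le
      (fun x => ne_bot_of_le_ne_bot (EReal.coe_ne_bot c) (hc x)) hr hrs₁ (hs₀.trans (hc r))
      (ne_top_of_le_ne_top (EReal.coe_ne_top c) hs₀) hk₁
    refine ⟨p, hp, fun s => le_trans ?_ ((hle s).trans (hkg s))⟩
    rw [EReal.coe_add]
    exact add_le_add_left ht.le _
  · push Not at hfin
    exact exists_nonneg_affine_le_of_eq_top_right hg (fun s => (hc s).trans (hkg s)) hct.le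
      (ht.trans_le (hkg r)) fun s hs => top_le_iff.1 (hfin s hs ▸ hkg s)

section NormedSpace

variable {E : Type*} [NormedAddCommGroup E] [NormedSpace ℝ E] {F : E → ℝ}

theorem ConvexOn.le_of_hasFDerivAt (hF : ConvexOn ℝ univ F) {x : E} {f' : StrongDual ℝ E}
    (hf : HasFDerivAt F f' x) (y : E) : F x + f' (y - x) ≤ F y := by
  have hφ : ConvexOn ℝ univ (F ∘ AffineMap.lineMap (k := ℝ) x y) := hF.comp_affineMap _
  have hderiv : HasDerivAt (F ∘ AffineMap.lineMap (k := ℝ) x y) (f' (y - x)) 0 := by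
    have hf0 : HasFDerivAt F f' (AffineMap.lineMap (k := ℝ) x y 0) := by simpa using hf
    exact hf0.comp_hasDerivAt 0 AffineMap.hasDerivAt_lineMap
  have := hφ.le_slope_of_hasDerivAt (mem_univ 0) (mem_univ 1) zero_lt_one hderiv
  simp only [slope_def_field, Function.comp_apply, AffineMap.lineMap_apply_zero,
    AffineMap.lineMap_apply_one, sub_zero, div_one] at this
  linarith

theorem ConvexOn.exists_subgradient (hF : ConvexOn ℝ univ F) (hFc : Continuous F) (x : E) :
    ∃ φ : StrongDual ℝ E, ∀ y, F x + φ (y - x) ≤ F y := by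
  -- separate `(x, F x)` from the open strict epigraph, then normalise the vertical component
  obtain ⟨f, hf⟩ := geometric_hahn_banach_point_open hF.convex_strict_epigraph
    (by simpa using isOpen_lt (hFc.comp continuous_fst) continuous_snd) (x := (x, F x))
    fun h => lt_irrefl _ h.2
  set c := f (0, 1)
  have hsplit : ∀ y t, f (y, t) = f (y, 0) + t * c := fun y t => by
    rw [show ((y, t) : E × ℝ) = (y, 0) + t • (0, 1) by simp, map_add, map_smul, smul_eq_mul]
  have hc : 0 < c := by
    have := hf (x, F x + 1) ⟨mem_univ _, lt_add_one _⟩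
    rw [hsplit x (F x + 1), hsplit x (F x)] at this
    linarith
  have key : ∀ y, f (x, 0) + F x * c ≤ f (y, 0) + F y * c := fun y => by
    refine le_of_forall_pos_lt_add fun ε hε => ?_
    have := hf (y, F y + ε / c) ⟨mem_univ _, lt_add_of_pos_right _ (div_pos hε hc)⟩
    rw [hsplit x (F x), hsplit y, add_mul, div_mul_cancel₀ _ hc.ne'] at this
    linarith
  refine ⟨-c⁻¹ • f.comp (ContinuousLinearMap.inl ℝ E ℝ), fun y => ?_⟩
  have hsub : f (y - x, 0) = f (y, 0) - f (x, 0) := by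
    rw [← map_sub, Prod.mk_sub_mk, sub_zero]
  simp only [_root_.smul_apply, ContinuousLinearMap.comp_apply,
    ContinuousLinearMap.inl_apply, smul_eq_mul, hsub]
  have : c⁻¹ * (f (x, 0) - f (y, 0)) ≤ F y - F x := by
    rw [inv_mul_le_iff₀ hc]; linarith [key y]
  linarith

end NormedSpace

theorem ConvexOn.le_of_hasGradientAt {E : Type*} [NormedAddCommGroup E] [InnerProductSpace ℝ E]
    [CompleteSpace E] {F : E → ℝ} (hF : ConvexOn ℝ univ F) {x m : E} (hm : HasGradientAt F m x)
    (y : E) : F x + ⟪m, y - x⟫ ≤ F y :=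
  hF.le_of_hasFDerivAt hm.hasFDerivAt y

section RadialMinimum

variable {d : ℕ}

lemma ubarE_of_neg (G : Ed d → EReal) {r : ℝ} (hr : r < 0) : ubarE G r = ⊤ := if_pos hr

lemma ubarE_le (G : Ed d → EReal) {r : ℝ} (hr : 0 ≤ r) {ℓ : Ed d} (hℓ : ‖ℓ‖ = 1) :
    ubarE G r ≤ G (r • ℓ) := by
  rw [ubarE, if_neg (not_lt.2 hr)]
  exact iInf₂_le ℓ hℓ

lemma le_ubarE {G : Ed d → EReal} {r : ℝ} {A : EReal}
    (h : ∀ ℓ : Ed d, ‖ℓ‖ = 1 → A ≤ G (r • ℓ)) : A ≤ ubarE G r := by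
  unfold ubarE
  split_ifs
  · exact le_top
  · exact le_iInf₂ h

lemma ubarE_norm_le [Nontrivial (Ed d)] (G : Ed d → EReal) (v : Ed d) : ubarE G ‖v‖ ≤ G v := by
  obtain ⟨ℓ, hℓ, hv⟩ : ∃ ℓ : Ed d, ‖ℓ‖ = 1 ∧ ‖v‖ • ℓ = v := by
    rcases eq_or_ne v 0 with rfl | hv
    · obtain ⟨ℓ, hℓ⟩ := exists_norm_eq (Ed d) zero_le_one
      exact ⟨ℓ, hℓ, by simp⟩
    · exact ⟨‖v‖⁻¹ • v, norm_smul_inv_norm hv, smul_inv_smul₀ (norm_ne_zero_iff.2 hv) v⟩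
  simpa [hv] using ubarE_le G (norm_nonneg v) hℓ

lemma exists_ubarE_eq [Nontrivial (Ed d)] {G : Ed d → EReal} (hG : LowerSemicontinuous G)
    {r : ℝ} (hr : 0 ≤ r) : ∃ ℓ : Ed d, ‖ℓ‖ = 1 ∧ G (r • ℓ) = ubarE G r := by
  have hS : IsCompact {ℓ : Ed d | ‖ℓ‖ = 1} := by
    simpa only [Metric.sphere, dist_zero_right] using isCompact_sphere (0 : Ed d) 1
  obtain ⟨ℓ₀, hℓ₀⟩ := exists_norm_eq (Ed d) zero_le_one
  obtain ⟨ℓ, hℓ, hmin⟩ := LowerSemicontinuousOn.exists_isMinOn ⟨ℓ₀, hℓ₀⟩ hS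
    ((hG.comp (continuous_const_smul r)).lowerSemicontinuousOn _)
  exact ⟨ℓ, hℓ, le_antisymm (le_ubarE fun ℓ' hℓ' => hmin hℓ') (ubarE_le G hr hℓ)⟩

theorem lowerSemicontinuous_ubarE [Nontrivial (Ed d)] {G : Ed d → EReal}
    (hG : LowerSemicontinuous G) : LowerSemicontinuous (ubarE G) := by
  refine lowerSemicontinuous_iff_isClosed_preimage.2 fun y => ?_
  rcases eq_or_ne y ⊤ with rfl | hy
  · simp
  -- the sublevel sets of `ubarE G` are the images of those of `G` under the (proper) norm
  have hsub : ubarE G ⁻¹' Iic y = dist 0 '' (G ⁻¹' Iic y) := by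
    ext r
    simp only [mem_preimage, mem_Iic, mem_image, dist_zero_left]
    constructor
    · intro hr
      have hr0 : 0 ≤ r := not_lt.1 fun hneg => hy (top_le_iff.1 (ubarE_of_neg G hneg ▸ hr))
      obtain ⟨ℓ, hℓ, heq⟩ := exists_ubarE_eq hG hr0
      exact ⟨r • ℓ, heq ▸ hr, by rw [norm_smul, hℓ, mul_one, Real.norm_of_nonneg hr0]⟩
    · rintro ⟨v, hv, rfl⟩
      exact (ubarE_norm_le G v).trans hv
  rw [hsub]
  exact (isProperMap_dist 0).isClosedMap _ (hG.isClosed_preimage y)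

end RadialMinimum

section Conjugate

variable {d : ℕ}

lemma coe_inner_sub_le_conjE (F : Ed d → ℝ) (u v : Ed d) :
    ((⟪u, v⟫ - F u : ℝ) : EReal) ≤ conjE F v :=
  le_iSup (fun u => ((⟪u, v⟫ - F u : ℝ) : EReal)) u

lemma conjE_eq_of_subgradient {F : Ed d → ℝ} {u v : Ed d} (h : ∀ w, F u + ⟪v, w - u⟫ ≤ F w) :
    conjE F v = ((⟪u, v⟫ - F u : ℝ) : EReal) := by
  refine le_antisymm (iSup_le fun w => EReal.coe_le_coe_iff.2 ?_) (coe_inner_sub_le_conjE F u v)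
  linarith [h w, inner_sub_right (𝕜 := ℝ) v w u, real_inner_comm v w, real_inner_comm v u]

lemma lowerSemicontinuous_conjE (F : Ed d → ℝ) : LowerSemicontinuous (conjE F) :=
  lowerSemicontinuous_iSup fun _ => (continuous_coe_real_ereal.comp
    ((continuous_const.inner continuous_id).sub continuous_const)).lowerSemicontinuous

lemma neg_le_ubarE_conjE (F : Ed d → ℝ) (r : ℝ) :
    ((-F 0 : ℝ) : EReal) ≤ ubarE (conjE F) r :=
  le_ubarE fun ℓ _ => by simpa using coe_inner_sub_le_conjE F 0 (r • ℓ)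

lemma conj1E_le_of_affine_le {g : ℝ → EReal} {p r t : ℝ}
    (h : ∀ s, ((t + p * (s - r) : ℝ) : EReal) ≤ g s) : conj1E g p ≤ ((p * r - t : ℝ) : EReal) :=
  iSup_le fun s => EReal.coe_sub_le_coe_iff.2 (by convert h s using 2; ring)

end Conjugate

section RadialMaximum

variable {d : ℕ} {F : Ed d → ℝ}

lemma le_barE (hF : Continuous F) (p : ℝ) {ℓ : Ed d} (hℓ : ‖ℓ‖ = 1) : F (p • ℓ) ≤ barE F p := by
  have hS : IsCompact {ℓ : Ed d | ‖ℓ‖ = 1} := by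
    simpa only [Metric.sphere, dist_zero_right] using isCompact_sphere (0 : Ed d) 1
  exact le_csSup (hS.image (hF.comp (continuous_const_smul p))).bddAbove (mem_image_of_mem _ hℓ)

variable [Nontrivial (Ed d)]

lemma barE_le {p A : ℝ} (h : ∀ ℓ : Ed d, ‖ℓ‖ = 1 → F (p • ℓ) ≤ A) : barE F p ≤ A := by
  obtain ⟨ℓ₀, hℓ₀⟩ := exists_norm_eq (Ed d) zero_le_one
  exact csSup_le ⟨_, mem_image_of_mem _ hℓ₀⟩ (forall_mem_image.2 h)

lemma coe_barE_le {p : ℝ} {A : EReal} (h : ∀ ℓ : Ed d, ‖ℓ‖ = 1 → (F (p • ℓ) : EReal) ≤ A) :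
    (barE F p : EReal) ≤ A := by
  obtain ⟨ℓ₀, hℓ₀⟩ := exists_norm_eq (Ed d) zero_le_one
  induction A using EReal.rec with
  | bot => exact absurd (h ℓ₀ hℓ₀) (EReal.bot_lt_coe _).not_ge
  | coe A => exact EReal.coe_le_coe_iff.2 (barE_le fun ℓ hℓ => EReal.coe_le_coe_iff.1 (h ℓ hℓ))
  | top => exact le_top

lemma barE_zero (F : Ed d → ℝ) : barE F 0 = F 0 := by
  obtain ⟨ℓ₀, hℓ₀⟩ := exists_norm_eq (Ed d) zero_le_one
  rw [barE]
  simp only [zero_smul]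
  rw [Nonempty.image_const ⟨ℓ₀, hℓ₀⟩, csSup_singleton]

lemma apply_zero_le_barE (hF : ConvexOn ℝ univ F) (p : ℝ) : F 0 ≤ barE F p := by
  have hFc : Continuous F := continuousOn_univ.1 (hF.continuousOn isOpen_univ)
  obtain ⟨ℓ, hℓ⟩ := exists_norm_eq (Ed d) zero_le_one
  have hmid := hF.2 (mem_univ (p • ℓ)) (mem_univ (p • -ℓ)) (by norm_num : (0 : ℝ) ≤ 1 / 2)
    (by norm_num : (0 : ℝ) ≤ 1 / 2) (by norm_num)
  rw [smul_neg, ← smul_add, add_neg_cancel, smul_zero, smul_eq_mul, smul_eq_mul] at hmid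
  have hneg : F (-(p • ℓ)) ≤ barE F p := by
    simpa only [smul_neg] using le_barE hFc p (show ‖-ℓ‖ = 1 by rwa [norm_neg])
  linarith [le_barE hFc p hℓ]

theorem convexOn_barE (hF : ConvexOn ℝ univ F) : ConvexOn ℝ univ (barE F) := by
  have hFc : Continuous F := continuousOn_univ.1 (hF.continuousOn isOpen_univ)
  refine ⟨convex_univ, fun x _ y _ a b ha hb hab => barE_le fun ℓ hℓ => ?_⟩
  rw [smul_eq_mul, smul_eq_mul, add_smul, mul_smul, mul_smul]
  calc F (a • x • ℓ + b • y • ℓ) ≤ a * F (x • ℓ) + b * F (y • ℓ) :=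
        hF.2 (mem_univ _) (mem_univ _) ha hb hab
    _ ≤ a * barE F x + b * barE F y := by
        gcongr
        · exact le_barE hFc x hℓ
        · exact le_barE hFc y hℓ

theorem monotoneOn_barE (hF : ConvexOn ℝ univ F) : MonotoneOn (barE F) (Ici 0) := by
  rintro p (hp : 0 ≤ p) q - hpq
  rcases hp.eq_or_lt with rfl | hp
  · exact (barE_zero F).trans_le (apply_zero_le_barE hF q)
  · exact (convexOn_barE hF).le_right_of_left_le'' (mem_univ 0) (mem_univ q) hp hpq
      ((barE_zero F).trans_le (apply_zero_le_barE hF p))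

end RadialMaximum

section Duality

variable {d : ℕ} [Nontrivial (Ed d)] {F : Ed d → ℝ}

theorem conj1E_ubarE_conjE (hF : ConvexOn ℝ univ F) {p : ℝ} (hp : 0 ≤ p) :
    conj1E (ubarE (conjE F)) p = barE F p := by
  have hFc : Continuous F := continuousOn_univ.1 (hF.continuousOn isOpen_univ)
  refine le_antisymm (iSup_le fun r => ?_) (coe_barE_le fun ℓ hℓ => ?_)
  · rcases lt_or_ge r 0 with hr | hr
    · rw [ubarE_of_neg _ hr, EReal.sub_top]
      exact bot_le
    refine EReal.coe_sub_le_coe_iff.2 (le_ubarE fun ℓ hℓ => ?_)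
    refine le_trans (EReal.coe_le_coe_iff.2 ?_) (coe_inner_sub_le_conjE F (p • ℓ) (r • ℓ))
    have hinner : ⟪p • ℓ, r • ℓ⟫ = p * r := by
      rw [real_inner_smul_left, real_inner_smul_right, real_inner_self_eq_norm_sq, hℓ]
      ring
    linarith [le_barE hFc p hℓ]
  · -- Fenchel–Young holds with equality at a subgradient `v` of `F` at `p • ℓ`
    obtain ⟨φ, hφ⟩ := hF.exists_subgradient hFc (p • ℓ)
    set v := (InnerProductSpace.toDual ℝ (Ed d)).symm φ
    have hv : conjE F v = ((⟪p • ℓ, v⟫ - F (p • ℓ) : ℝ) : EReal) :=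
      conjE_eq_of_subgradient fun w => by simpa [v] using hφ w
    have hinner : ⟪p • ℓ, v⟫ ≤ p * ‖v‖ := by
      rw [real_inner_smul_left]
      exact mul_le_mul_of_nonneg_left ((real_inner_le_norm ℓ v).trans (by rw [hℓ, one_mul])) hp
    calc (F (p • ℓ) : EReal) ≤ ((p * ‖v‖ : ℝ) : EReal) - conjE F v := by
          rw [hv, ← EReal.coe_sub, EReal.coe_le_coe_iff]
          linarith
      _ ≤ ((p * ‖v‖ : ℝ) : EReal) - ubarE (conjE F) ‖v‖ :=
          EReal.sub_le_sub le_rfl (ubarE_norm_le _ v)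
      _ ≤ conj1E (ubarE (conjE F)) p :=
          le_iSup (fun r : ℝ => ((p * r : ℝ) : EReal) - ubarE (conjE F) r) ‖v‖

theorem le_ubarE_conjE (hF : ConvexOn ℝ univ F) (r : ℝ) :
    ⨆ p ∈ Ici (0 : ℝ), ((p * r - barE F p : ℝ) : EReal) ≤ ubarE (conjE F) r := by
  refine iSup₂_le fun p hp => EReal.coe_sub_le_coe_iff.1 ?_
  rw [← conj1E_ubarE_conjE hF hp]
  exact le_iSup (fun r : ℝ => ((p * r : ℝ) : EReal) - ubarE (conjE F) r) r

theorem convMinE_ubarE_conjE_le (hF : ConvexOn ℝ univ F) {m : Ed d} (hm : HasGradientAt F m 0)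
    {r : ℝ} (hr : ‖m‖ ≤ r) :
    convMinE (ubarE (conjE F)) r ≤ ⨆ p ∈ Ici (0 : ℝ), ((p * r - barE F p : ℝ) : EReal) := by
  have hmin : ubarE (conjE F) ‖m‖ ≤ ((-F 0 : ℝ) : EReal) := by
    have hm' : conjE F m = ((⟪0, m⟫ - F 0 : ℝ) : EReal) :=
      conjE_eq_of_subgradient fun w => by simpa using hF.le_of_hasGradientAt hm w
    simpa [hm'] using ubarE_norm_le (conjE F) m
  refine iSup₂_le fun h ⟨hh, hhg⟩ => EReal.ge_of_forall_gt_iff_ge.1 fun t ht => ?_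
  obtain ⟨p, hp, hline⟩ := exists_nonneg_affine_le_of_convex_minorant
    (hh.sup (ERealConvexOn.const (-F 0))) (fun s => max_le (hhg s) (neg_le_ubarE_conjE F s))
    (lowerSemicontinuous_ubarE (lowerSemicontinuous_conjE F) r) (fun s => le_max_right _ _)
    (max_le ((hhg _).trans hmin) le_rfl) hr (ht.trans_le (le_max_left _ _))
  have hconj := conj1E_le_of_affine_le hline
  rw [conj1E_ubarE_conjE hF hp, EReal.coe_le_coe_iff] at hconj
  exact le_iSup₂_of_le p hp (EReal.coe_le_coe_iff.2 (by linarith))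

end Duality

/-- Let `F : ℝ^d → ℝ` (`d ≥ 1`) be convex, finite on all of `ℝ^d` and
differentiable at `0` with `m = ∇F(0)`.  Then:
(i) `bar F` is increasing and convex on `[0, ∞)`;
(ii) `(ubar (F*))*(p) = bar F(p)` for all `p ≥ 0`;
(iii) for every `r ≥ |m|`, `(conv ubar (F*))(r) = (bar F)*(r)`, where `bar F(p) := +∞` for
`p < 0` (so the supremum in `(bar F)*` runs over `p ≥ 0`). -/
theorem radial_conjugacy_general
    {d : ℕ} (hd : 0 < d) (F : Ed d → ℝ)
    (hF : ConvexOn ℝ Set.univ F)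
    (m : Ed d) (hm : HasGradientAt F m 0) :
    (MonotoneOn (barE F) (Set.Ici 0) ∧ ConvexOn ℝ (Set.Ici 0) (barE F)) ∧
      (∀ p : ℝ, 0 ≤ p → conj1E (ubarE (conjE F)) p = (barE F p : EReal)) ∧
      (∀ r : ℝ, ‖m‖ ≤ r →
        convMinE (ubarE (conjE F)) r =
          ⨆ p ∈ Set.Ici (0 : ℝ), ((p * r - barE F p : ℝ) : EReal)) := by
  have : Nonempty (Fin d) := ⟨⟨0, hd⟩⟩
  refine ⟨⟨monotoneOn_barE hF, (convexOn_barE hF).subset (subset_univ _) (convex_Ici 0)⟩,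
    fun p hp => conj1E_ubarE_conjE hF hp, fun r hr => ?_⟩
  have hconv : ERealConvexOn univ fun x => ⨆ p ∈ Ici (0 : ℝ), ((p * x - barE F p : ℝ) : EReal) :=
    ERealConvexOn.iSup fun p => ERealConvexOn.iSup fun _ => ERealConvexOn.affine p (barE F p)
  exact le_antisymm (convMinE_ubarE_conjE_le hF hm hr)
    (le_iSup₂_of_le _ ⟨hconv, le_ubarE_conjE hF⟩ le_rfl)

end
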